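/- Let G be a finite simple graph on N vertices with augmented normalized Laplacian Δ̃ and P = I_N − Δ̃, and let λ > 0 be such that every eigenvalue μ of Δ̃ satisfies μ = 0 or μ ≥ λ and (1 − μ)² ≤ (1 − λ)²; set λ̄ = (1 − λ)². Let (W_l)_{l ∈ ℕ} be weight matrices in ℝ^{C×C} and suppose s ≥ σ_max(W_l)² for all l. Define X^{(l+1)} = ReLU(P X^{(l)} W_l) (ReLU applied entrywise) from an initial X^{(0)} ∈ ℝ^{N×C}. Then E(X^{(l)}) ≤ (s λ̄)^l · E(X^{(0)}) for all l ∈ ℕ; in particular, if s λ̄ < 1 then E(X^{(l)}) → 0 as l → ∞. -/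

import Mathlib

open Matrix

/-- The ReLU activation. -/
noncomputable def relu (x : ℝ) : ℝ := max x 0

/-- The spectral norm (largest singular value) of a real matrix. -/
noncomputable def matSpectralNorm {m n : ℕ} (M : Matrix (Fin m) (Fin n) ℝ) : ℝ :=
  ‖LinearMap.toContinuousLinearMap (Matrix.toEuclideanLin M)‖

/-!
Write the energy edgewise, `E(X) = ½ ∑ᵢⱼ ãᵢⱼ ‖xᵢ/√(dᵢ+1) - xⱼ/√(dⱼ+1)‖²` over the rows `xᵢ`
of `X`. Then each of the three operations of a layer is controlled separately: `X ↦ PX`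
multiplies the energy by at most `λ̄`, since `λ̄ Δ̃ - P Δ̃ P` is `p(Δ̃)` for the polynomial
`p(μ) = μ (λ̄ - (1 - μ)²)`, which is nonnegative on the spectrum; `X ↦ XW` multiplies each edge
term, a difference of rows, by at most `σ_max(W)²`; and ReLU, being positively homogeneous and
1-Lipschitz, cannot increase any edge term. Iterating gives the geometric bound.
-/

open scoped Matrix.Norms.L2Operator MatrixOrder

lemma matSpectralNorm_eq_l2_opNorm {m n : ℕ} (M : Matrix (Fin m) (Fin n) ℝ) :
    matSpectralNorm M = ‖M‖ :=
  rfl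

lemma dotProduct_vecMul_self_le {m n : Type*} [Fintype m] [Fintype n] [DecidableEq m]
    [DecidableEq n] (W : Matrix m n ℝ) (v : m → ℝ) :
    (v ᵥ* W) ⬝ᵥ (v ᵥ* W) ≤ ‖W‖ ^ 2 * (v ⬝ᵥ v) := by
  have h := Wᵀ.l2_opNorm_mulVec (WithLp.toLp 2 v)
  rw [← conjTranspose_eq_transpose_of_trivial, l2_opNorm_conjTranspose,
    conjTranspose_eq_transpose_of_trivial, mulVec_transpose] at h
  have h2 := pow_le_pow_left₀ (norm_nonneg _) h 2
  rw [mul_pow, EuclideanSpace.real_norm_sq_eq, EuclideanSpace.real_norm_sq_eq] at h2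
  simpa [dotProduct, sq] using h2

lemma exists_mulVec_eq_smul_of_mem_spectrum {n K : Type*} [Fintype n] [DecidableEq n] [Field K]
    {A : Matrix n n K} {μ : K} (h : μ ∈ spectrum K A) : ∃ u ≠ 0, A *ᵥ u = μ • u := by
  rw [← spectrum_toLin', ← Module.End.hasEigenvalue_iff_mem_spectrum] at h
  obtain ⟨u, hu, hu0⟩ := h.exists_hasEigenvector
  exact ⟨u, hu0, by simpa using Module.End.mem_eigenspace_iff.mp hu⟩

open Polynomial in
lemma Matrix.IsHermitian.posSemidef_smul_sub_one_sub_mul_mul {n : Type*} [Fintype n]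
    [DecidableEq n] {A : Matrix n n ℝ} (hA : A.IsHermitian) {c : ℝ}
    (h : ∀ μ ∈ spectrum ℝ A, 0 ≤ μ ∧ (1 - μ) ^ 2 ≤ c) :
    (c • A - (1 - A) * A * (1 - A)).PosSemidef := by
  have hcfc : cfc (fun μ => (C c * X - (1 - X) * X * (1 - X) : ℝ[X]).eval μ) A
      = c • A - (1 - A) * A * (1 - A) := by
    rw [cfc_polynomial _ A hA.isSelfAdjoint]
    simp [Algebra.smul_def]
  rw [← nonneg_iff_posSemidef, ← hcfc]
  refine cfc_nonneg fun μ hμ => ?_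
  obtain ⟨h0, h1⟩ := h μ hμ
  simp only [eval_sub, eval_mul, eval_C, eval_X, eval_one]
  nlinarith

lemma trace_transpose_mul_mul_le_of_posSemidef {n m : Type*} [Fintype n] [Fintype m]
    {A P : Matrix n n ℝ} {c : ℝ} (h : (c • A - Pᵀ * A * P).PosSemidef) (Y : Matrix n m ℝ) :
    trace ((P * Y)ᵀ * A * (P * Y)) ≤ c * trace (Yᵀ * A * Y) := by
  have h0 := (h.conjTranspose_mul_mul_same Y).trace_nonneg
  rw [conjTranspose_eq_transpose_of_trivial, Matrix.mul_sub, Matrix.sub_mul, trace_sub,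
    Matrix.mul_smul, Matrix.smul_mul, trace_smul, smul_eq_mul, sub_nonneg] at h0
  simpa only [transpose_mul, Matrix.mul_assoc] using h0

lemma relu_sub_relu_sq_le (a b : ℝ) : (relu a - relu b) ^ 2 ≤ (a - b) ^ 2 :=
  sq_le_sq.mpr (abs_max_sub_max_le_abs a b 0)

lemma mul_relu {c : ℝ} (hc : 0 ≤ c) (a : ℝ) : c * relu a = relu (c * a) := by
  rw [relu, relu, mul_max_of_nonneg _ _ hc, mul_zero]

section EdgeEnergy

variable {n m m' : Type*} [Fintype n] [Fintype m] [Fintype m']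

noncomputable def edgeEnergy (B : Matrix n n ℝ) (g : n → ℝ) (Y : Matrix n m ℝ) : ℝ :=
  (∑ i, ∑ j, B i j * ((g i • Y i - g j • Y j) ⬝ᵥ (g i • Y i - g j • Y j))) / 2

lemma edgeEnergy_nonneg {B : Matrix n n ℝ} (hB : ∀ i j, 0 ≤ B i j) (g : n → ℝ)
    (Y : Matrix n m ℝ) : 0 ≤ edgeEnergy B g Y :=
  div_nonneg (Finset.sum_nonneg fun i _ => Finset.sum_nonneg fun j _ =>
    mul_nonneg (hB i j) (Finset.sum_nonneg fun _ _ => mul_self_nonneg _)) zero_le_two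

lemma edgeEnergy_le_mul_of_forall {B : Matrix n n ℝ} (hB : ∀ i j, 0 ≤ B i j) {g : n → ℝ}
    {c : ℝ} {Y : Matrix n m ℝ} {Z : Matrix n m' ℝ}
    (h : ∀ i j, (g i • Z i - g j • Z j) ⬝ᵥ (g i • Z i - g j • Z j) ≤
      c * ((g i • Y i - g j • Y j) ⬝ᵥ (g i • Y i - g j • Y j))) :
    edgeEnergy B g Z ≤ c * edgeEnergy B g Y := by
  rw [edgeEnergy, edgeEnergy, mul_div_assoc']
  refine div_le_div_of_nonneg_right ?_ zero_le_two
  rw [Finset.mul_sum]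
  refine Finset.sum_le_sum fun i _ => ?_
  rw [Finset.mul_sum]
  refine Finset.sum_le_sum fun j _ => ?_
  rw [mul_left_comm]
  exact mul_le_mul_of_nonneg_left (h i j) (hB i j)

lemma edgeEnergy_map_relu_le {B : Matrix n n ℝ} (hB : ∀ i j, 0 ≤ B i j) {g : n → ℝ}
    (hg : ∀ i, 0 ≤ g i) (Y : Matrix n m ℝ) :
    edgeEnergy B g (Y.map relu) ≤ edgeEnergy B g Y := by
  simpa only [one_mul] using edgeEnergy_le_mul_of_forall hB (c := 1) fun i j => by
    simp only [one_mul, dotProduct, Pi.sub_apply, Pi.smul_apply, smul_eq_mul, map_apply,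
      mul_relu (hg i), mul_relu (hg j), ← sq]
    exact Finset.sum_le_sum fun k _ => relu_sub_relu_sq_le _ _

lemma edgeEnergy_mul_le [DecidableEq m] [DecidableEq m'] {B : Matrix n n ℝ}
    (hB : ∀ i j, 0 ≤ B i j) (g : n → ℝ) (Y : Matrix n m ℝ) (W : Matrix m m' ℝ) :
    edgeEnergy B g (Y * W) ≤ ‖W‖ ^ 2 * edgeEnergy B g Y :=
  edgeEnergy_le_mul_of_forall hB fun i j => by
    have hrow : ∀ k, (Y * W) k = Y k ᵥ* W := fun k => rfl
    rw [hrow, hrow, ← smul_vecMul, ← smul_vecMul, ← sub_vecMul]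
    exact dotProduct_vecMul_self_le W _

lemma trace_transpose_mul_mul_eq_sum (M : Matrix n n ℝ) (Y : Matrix n m ℝ) :
    trace (Yᵀ * M * Y) = ∑ i, ∑ j, M i j * (Y i ⬝ᵥ Y j) := by
  rw [Matrix.mul_assoc, trace_mul_comm]
  simp only [trace, diag, mul_apply, transpose_apply, dotProduct, Finset.mul_sum, Finset.sum_mul]
  refine Finset.sum_congr rfl fun i _ => Finset.sum_comm.trans ?_
  exact Finset.sum_congr rfl fun j _ => Finset.sum_congr rfl fun c _ => by ring

variable [DecidableEq n]

lemma trace_one_sub_diagonal_mul_mul_diagonal_eq_edgeEnergy {B : Matrix n n ℝ} (hB : Bᵀ = B)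
    {g : n → ℝ} (hg : ∀ i, (∑ j, B i j) * g i ^ 2 = 1) (Y : Matrix n m ℝ) :
    trace (Yᵀ * (1 - diagonal g * B * diagonal g) * Y) = edgeEnergy B g Y := by
  have hrow : ∀ i x, ∑ j, B i j * (g i ^ 2 * x) = x := fun i x => by
    rw [← Finset.sum_mul, ← mul_assoc, hg, one_mul]
  have hcol : ∀ j x, ∑ i, B i j * (g j ^ 2 * x) = x := fun j x => by
    simp_rw [← transpose_apply B, hB]
    exact hrow j x
  have hexpand : ∀ i j, B i j * ((g i • Y i - g j • Y j) ⬝ᵥ (g i • Y i - g j • Y j)) =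
      B i j * (g i ^ 2 * (Y i ⬝ᵥ Y i)) + B i j * (g j ^ 2 * (Y j ⬝ᵥ Y j))
        - 2 * (g i * B i j * g j * (Y i ⬝ᵥ Y j)) := fun i j => by
    simp only [dotProduct_sub, sub_dotProduct, dotProduct_smul, smul_dotProduct, smul_eq_mul,
      dotProduct_comm (Y j) (Y i)]
    ring
  rw [trace_transpose_mul_mul_eq_sum, edgeEnergy]
  simp only [hexpand, Finset.sum_sub_distrib, Finset.sum_add_distrib, ← Finset.mul_sum, hrow]
  rw [Finset.sum_comm (f := fun i j => B i j * (g j ^ 2 * (Y j ⬝ᵥ Y j)))]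
  simp only [hcol, Matrix.sub_apply, one_apply, mul_diagonal, diagonal_mul, ite_mul, one_mul,
    zero_mul, sub_mul, Finset.sum_sub_distrib, Finset.sum_ite_eq, Finset.mem_univ, if_true]
  ring

end EdgeEnergy

namespace SimpleGraph

variable {V : Type*} [DecidableEq V] (G : SimpleGraph V) [DecidableRel G.Adj]

lemma adjMatrix_add_one_nonneg (i j : V) : 0 ≤ (G.adjMatrix ℝ + 1) i j := by
  simp only [Matrix.add_apply, adjMatrix_apply, one_apply]
  positivity

variable [Fintype V]

noncomputable def augDegreeInvSqrt (i : V) : ℝ := (Real.sqrt ((G.degree i : ℝ) + 1))⁻¹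

noncomputable def augNormLaplacian : Matrix V V ℝ :=
  1 - diagonal G.augDegreeInvSqrt * (G.adjMatrix ℝ + 1) * diagonal G.augDegreeInvSqrt

lemma sum_adjMatrix_add_one_apply (i : V) : ∑ j, (G.adjMatrix ℝ + 1) i j = G.degree i + 1 := by
  have h := adjMatrix_mulVec_const_apply (G := G) (α := ℝ) (a := 1) (v := i)
  simp only [mulVec, dotProduct, Function.const_apply, mul_one] at h
  simp only [Matrix.add_apply, Finset.sum_add_distrib, h, one_apply, Finset.sum_ite_eq,
    Finset.mem_univ, if_true]

lemma sum_adjMatrix_add_one_apply_mul_augDegreeInvSqrt_sq (i : V) :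
    (∑ j, (G.adjMatrix ℝ + 1) i j) * G.augDegreeInvSqrt i ^ 2 = 1 := by
  rw [sum_adjMatrix_add_one_apply, augDegreeInvSqrt, inv_pow, Real.sq_sqrt (by positivity),
    mul_inv_cancel₀ (by positivity)]

lemma isHermitian_augNormLaplacian : G.augNormLaplacian.IsHermitian := by
  rw [IsHermitian, conjTranspose_eq_transpose_of_trivial, augNormLaplacian, transpose_sub,
    transpose_one, transpose_mul, transpose_mul, diagonal_transpose, transpose_add,
    transpose_adjMatrix, transpose_one, Matrix.mul_assoc]

lemma trace_augNormLaplacian_eq_edgeEnergy {m : Type*} [Fintype m] (Y : Matrix V m ℝ) :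
    trace (Yᵀ * G.augNormLaplacian * Y) =
      edgeEnergy (G.adjMatrix ℝ + 1) G.augDegreeInvSqrt Y := by
  refine trace_one_sub_diagonal_mul_mul_diagonal_eq_edgeEnergy ?_
    G.sum_adjMatrix_add_one_apply_mul_augDegreeInvSqrt_sq Y
  rw [transpose_add, transpose_adjMatrix, transpose_one]

lemma trace_augNormLaplacian_nonneg {m : Type*} [Fintype m] (Y : Matrix V m ℝ) :
    0 ≤ trace (Yᵀ * G.augNormLaplacian * Y) :=
  G.trace_augNormLaplacian_eq_edgeEnergy Y ▸ edgeEnergy_nonneg G.adjMatrix_add_one_nonneg _ Y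

lemma trace_augNormLaplacian_gcnLayer_le {m m' : Type*} [Fintype m] [Fintype m']
    [DecidableEq m] [DecidableEq m'] {c s : ℝ}
    (hc : (c • G.augNormLaplacian - (1 - G.augNormLaplacian) * G.augNormLaplacian *
      (1 - G.augNormLaplacian)).PosSemidef)
    (X : Matrix V m ℝ) (W : Matrix m m' ℝ) (hW : ‖W‖ ^ 2 ≤ s) :
    trace ((((1 - G.augNormLaplacian) * X * W).map relu)ᵀ * G.augNormLaplacian *
        ((1 - G.augNormLaplacian) * X * W).map relu) ≤
      s * c * trace (Xᵀ * G.augNormLaplacian * X) := by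
  have hB := G.adjMatrix_add_one_nonneg
  have hg : ∀ i, 0 ≤ G.augDegreeInvSqrt i := fun i => by
    rw [augDegreeInvSqrt]; positivity
  have hPsymm : (1 - G.augNormLaplacian)ᵀ = 1 - G.augNormLaplacian := by
    rw [transpose_sub, transpose_one, ← conjTranspose_eq_transpose_of_trivial,
      G.isHermitian_augNormLaplacian.eq]
  have hPstep := trace_transpose_mul_mul_le_of_posSemidef (P := 1 - G.augNormLaplacian)
    (by rwa [hPsymm]) X
  have hs : 0 ≤ s := (sq_nonneg _).trans hW
  rw [trace_augNormLaplacian_eq_edgeEnergy, trace_augNormLaplacian_eq_edgeEnergy] at hPstep ⊢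
  calc _ ≤ edgeEnergy (G.adjMatrix ℝ + 1) G.augDegreeInvSqrt ((1 - G.augNormLaplacian) * X * W) :=
        edgeEnergy_map_relu_le hB hg _
    _ ≤ s * edgeEnergy (G.adjMatrix ℝ + 1) G.augDegreeInvSqrt ((1 - G.augNormLaplacian) * X) :=
        (edgeEnergy_mul_le hB _ _ W).trans
          (mul_le_mul_of_nonneg_right hW (edgeEnergy_nonneg hB _ _))
    _ ≤ s * (c * edgeEnergy (G.adjMatrix ℝ + 1) G.augDegreeInvSqrt X) :=
        mul_le_mul_of_nonneg_left hPstep hs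
    _ = _ := by ring

end SimpleGraph

theorem gcn_energy_exponential_decay_general
    (N : ℕ) (G : SimpleGraph (Fin N)) [DecidableRel G.Adj]
    (A Atil DtilInvSqrt Δ P : Matrix (Fin N) (Fin N) ℝ)
    (hA : A = G.adjMatrix ℝ)
    (hAtil : Atil = A + 1)
    (hDtilInvSqrt : DtilInvSqrt = Matrix.diagonal
      (fun i => (Real.sqrt ((G.degree i : ℝ) + 1))⁻¹))
    (hΔ : Δ = 1 - DtilInvSqrt * Atil * DtilInvSqrt)
    (hP : P = 1 - Δ)
    (lam : ℝ) (hlam : 0 < lam)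
    (heig : ∀ (μ : ℝ) (u : Fin N → ℝ), u ≠ 0 → Δ.mulVec u = μ • u →
      (μ = 0 ∨ lam ≤ μ) ∧ (1 - μ) ^ 2 ≤ (1 - lam) ^ 2)
    (C : ℕ) (W : ℕ → Matrix (Fin C) (Fin C) ℝ)
    (s : ℝ) (hs : ∀ l, (matSpectralNorm (W l)) ^ 2 ≤ s)
    (X : ℕ → Matrix (Fin N) (Fin C) ℝ)
    (hX : ∀ l, X (l + 1) = ((P * X l) * W l).map relu) :
    (∀ l : ℕ, Matrix.trace ((X l)ᵀ * Δ * X l) ≤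
        (s * (1 - lam) ^ 2) ^ l * Matrix.trace ((X 0)ᵀ * Δ * X 0)) ∧
    (s * (1 - lam) ^ 2 < 1 →
      Filter.Tendsto (fun l => Matrix.trace ((X l)ᵀ * Δ * X l))
        Filter.atTop (nhds 0)) := by
  have hΔG : Δ = G.augNormLaplacian := by subst hΔ hDtilInvSqrt hAtil hA; rfl
  subst hΔG hP
  have hspec : ((1 - lam) ^ 2 • G.augNormLaplacian - (1 - G.augNormLaplacian) *
      G.augNormLaplacian * (1 - G.augNormLaplacian)).PosSemidef := by
    refine G.isHermitian_augNormLaplacian.posSemidef_smul_sub_one_sub_mul_mul fun μ hμ => ?_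
    obtain ⟨u, hu, hμu⟩ := exists_mulVec_eq_smul_of_mem_spectrum hμ
    obtain ⟨hμ0 | hμlam, hμsq⟩ := heig μ u hu hμu
    exacts [⟨hμ0.ge, hμsq⟩, ⟨hlam.le.trans hμlam, hμsq⟩]
  have hrate : 0 ≤ s * (1 - lam) ^ 2 := mul_nonneg ((sq_nonneg _).trans (hs 0)) (sq_nonneg _)
  have hdecay (l : ℕ) :=
    le_geom (u := fun l => trace ((X l)ᵀ * G.augNormLaplacian * X l)) hrate l fun k _ =>
      hX k ▸ G.trace_augNormLaplacian_gcnLayer_le hspec (X k) (W k)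
        (matSpectralNorm_eq_l2_opNorm (W k) ▸ hs k)
  refine ⟨hdecay, fun hlt => squeeze_zero (fun l => G.trace_augNormLaplacian_nonneg (X l))
    hdecay ?_⟩
  simpa using (tendsto_pow_atTop_nhds_zero_of_lt_one hrate hlt).mul_const _

/-- For the GCN iteration `X^{(l+1)} = ReLU(P X^{(l)} W_l)` with
`σ_max(W_l)² ≤ s`, the Dirichlet energy satisfies
`E(X^{(l)}) ≤ (s λ̄)^l E(X^{(0)})` where `λ̄ = (1-λ)²` and `λ` is the smallest
nonzero eigenvalue of the augmented normalized Laplacian `Δ̃`; in particular,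
`E(X^{(l)}) → 0` exponentially when `s λ̄ < 1`. -/
theorem gcn_energy_exponential_decay
    (N : ℕ) (G : SimpleGraph (Fin N)) [DecidableRel G.Adj]
    (A D Atil Dtil DtilInvSqrt Δ P : Matrix (Fin N) (Fin N) ℝ)
    (hA : A = G.adjMatrix ℝ)
    (hD : D = Matrix.diagonal (fun i => (G.degree i : ℝ)))
    (hAtil : Atil = A + 1)
    (hDtil : Dtil = D + 1)
    (hDtilInvSqrt : DtilInvSqrt = Matrix.diagonal
      (fun i => (Real.sqrt ((G.degree i : ℝ) + 1))⁻¹))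
    (hΔ : Δ = 1 - DtilInvSqrt * Atil * DtilInvSqrt)
    (hP : P = 1 - Δ)
    (lam : ℝ) (hlam : 0 < lam)
    (heig : ∀ (μ : ℝ) (u : Fin N → ℝ), u ≠ 0 → Δ.mulVec u = μ • u →
      (μ = 0 ∨ lam ≤ μ) ∧ (1 - μ) ^ 2 ≤ (1 - lam) ^ 2)
    (C : ℕ) (W : ℕ → Matrix (Fin C) (Fin C) ℝ)
    (s : ℝ) (hs : ∀ l, (matSpectralNorm (W l)) ^ 2 ≤ s)
    (X : ℕ → Matrix (Fin N) (Fin C) ℝ)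
    (hX : ∀ l, X (l + 1) = ((P * X l) * W l).map relu) :
    (∀ l : ℕ, Matrix.trace ((X l)ᵀ * Δ * X l) ≤
        (s * (1 - lam) ^ 2) ^ l * Matrix.trace ((X 0)ᵀ * Δ * X 0)) ∧
    (s * (1 - lam) ^ 2 < 1 →
      Filter.Tendsto (fun l => Matrix.trace ((X l)ᵀ * Δ * X l))
        Filter.atTop (nhds 0)) :=
  gcn_energy_exponential_decay_general N G A Atil DtilInvSqrt Δ P hA hAtil hDtilInvSqrt hΔ hP lam
    hlam heig C W s hs X hX
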